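/- arXiv:1002.1868 — 2 statements merged into one kernel-verified Lean document; each statement's English description precedes it below -/
import Mathlib

section
/- If a relation r on a type α is terminating (well-founded in the reverse direction, i.e., there is no infinite chain t₁ r t₂ r t₃ r ⋯) and locally confluent (whenever s r t₁ and s r t₂, there exists t with t₁ r* t and t₂ r* t, where r* is the reflexive-transitive closure), then r is confluent (whenever s r* t₁ and s r* t₂, there exists t with t₁ r* t and t₂ r* t). -/
namespace Relation

variable {α : Type*} {r : α → α → Prop}

/-- A nontrivial peak `b *← a₁ ← a → a₂ →* c` is closed by the local join of `a₁ ← a → a₂`,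
then by `ih` at `a₁` and finally by `ih` at `a₂`, whose second leg runs through that join. -/
theorem join_reflTransGen_of_succ
    (hlc : ∀ a b c, r a b → r a c → Join (ReflTransGen r) b c) {a : α}
    (ih : ∀ a', r a a' → ∀ b c, ReflTransGen r a' b → ReflTransGen r a' c →
      Join (ReflTransGen r) b c)
    {b c : α} (hab : ReflTransGen r a b) (hac : ReflTransGen r a c) :
    Join (ReflTransGen r) b c := by
  rcases hab.cases_head with rfl | ⟨a₁, haa₁, ha₁b⟩
  · exact ⟨c, hac, .refl⟩
  rcases hac.cases_head with rfl | ⟨a₂, haa₂, ha₂c⟩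
  · exact ⟨b, .refl, .head haa₁ ha₁b⟩
  obtain ⟨d, ha₁d, ha₂d⟩ := hlc a a₁ a₂ haa₁ haa₂
  obtain ⟨e, hbe, hde⟩ := ih a₁ haa₁ b d ha₁b ha₁d
  obtain ⟨f, hcf, hef⟩ := ih a₂ haa₂ c e ha₂c (ha₂d.trans hde)
  exact ⟨f, hbe.trans hef, hcf⟩

theorem join_reflTransGen_of_wellFounded_flip (hwf : WellFounded (flip r))
    (hlc : ∀ a b c, r a b → r a c → Join (ReflTransGen r) b c) (a : α) {b c : α}
    (hab : ReflTransGen r a b) (hac : ReflTransGen r a c) :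
    Join (ReflTransGen r) b c := by
  induction a using hwf.induction generalizing b c with
  | _ a ih => exact join_reflTransGen_of_succ hlc (fun a' haa' _ _ ↦ ih a' haa') hab hac

end Relation

theorem stmt_6 {α : Type*} (r : α → α → Prop)
    (hterm : WellFounded (flip r))
    (hlc : ∀ s t₁ t₂, r s t₁ → r s t₂ →
      ∃ t, Relation.ReflTransGen r t₁ t ∧ Relation.ReflTransGen r t₂ t) :
    ∀ s t₁ t₂, Relation.ReflTransGen r s t₁ → Relation.ReflTransGen r s t₂ →
      ∃ t, Relation.ReflTransGen r t₁ t ∧ Relation.ReflTransGen r t₂ t :=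
  fun s _ _ ↦ Relation.join_reflTransGen_of_wellFounded_flip hterm hlc s
end

section
/- Interpreting A_{XY} as X ⊆ Y, E_{XY} as X ∩ Y = ∅, I_{XY} as X ∩ Y ≠ ∅, and O_{XY} as X \ Y ≠ ∅: if A_{i} ⊆ A_{i−1} for 2 ≤ i ≤ k, A_k ∩ A_{k+1} ≠ ∅, A_j ⊆ A_{j+1} for k+1 ≤ j ≤ m−1, A_m ∩ A_{m+1} = ∅, and A_{l+1} ⊆ A_l for m+1 ≤ l ≤ n−1, then A₁ \ A_n ≠ ∅. -/
/-!
A point `x` of `A k ∩ A (k + 1)` lies in `A 1` by the descending chain from `A k`, and in `A m`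
by the ascending chain from `A (k + 1)`. Disjointness keeps it out of `A (m + 1)`, which
contains `A n` by the final descending chain.
-/

open Set

section Chains

variable {U : Type*} {A : ℕ → Set U} {a b : ℕ}

lemma antitoneOn_Icc_of_subset_pred (h : ∀ i, a + 1 ≤ i → i ≤ b → A i ⊆ A (i - 1)) :
    AntitoneOn A (Icc a b) :=
  antitoneOn_of_add_one_le ordConnected_Icc fun i _ hi hi₁ => by
    simpa using h (i + 1) (Nat.succ_le_succ hi.1) hi₁.2

lemma monotoneOn_Icc_of_subset_succ (h : ∀ j, a ≤ j → j ≤ b - 1 → A j ⊆ A (j + 1)) :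
    MonotoneOn A (Icc a b) :=
  monotoneOn_of_le_add_one ordConnected_Icc fun j _ hj hj₁ =>
    h j hj.1 (Nat.le_sub_one_of_lt hj₁.2)

lemma antitoneOn_Icc_of_succ_subset (h : ∀ l, a ≤ l → l ≤ b - 1 → A (l + 1) ⊆ A l) :
    AntitoneOn A (Icc a b) :=
  antitoneOn_of_add_one_le ordConnected_Icc fun l _ hl hl₁ =>
    h l hl.1 (Nat.le_sub_one_of_lt hl₁.2)

end Chains

theorem stmt_16 {U : Type*} (n k m : ℕ) (hk : 1 ≤ k) (hkm : k < m) (hmn : m < n)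
    (A : ℕ → Set U)
    (hdown₁ : ∀ i, 2 ≤ i → i ≤ k → A i ⊆ A (i - 1))
    (hmeet : A k ∩ A (k + 1) ≠ ∅)
    (hup : ∀ j, k + 1 ≤ j → j ≤ m - 1 → A j ⊆ A (j + 1))
    (hdisj : A m ∩ A (m + 1) = ∅)
    (hdown₂ : ∀ l, m + 1 ≤ l → l ≤ n - 1 → A (l + 1) ⊆ A l) :
    A 1 \ A n ≠ ∅ := by
  obtain ⟨x, hxk, hxk₁⟩ := nonempty_iff_ne_empty.2 hmeet
  have hx₁ : x ∈ A 1 :=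
    antitoneOn_Icc_of_subset_pred hdown₁ ⟨le_rfl, hk⟩ ⟨hk, le_rfl⟩ hk hxk
  have hxm : x ∈ A m :=
    monotoneOn_Icc_of_subset_succ hup ⟨le_rfl, hkm⟩ ⟨hkm, le_rfl⟩ hkm hxk₁
  have hxn : x ∉ A n := fun hxn => by
    have hxm₁ : x ∈ A (m + 1) :=
      antitoneOn_Icc_of_succ_subset hdown₂ ⟨le_rfl, hmn⟩ ⟨hmn, le_rfl⟩ hmn hxn
    exact (disjoint_iff_inter_eq_empty.2 hdisj).notMem_of_mem_left hxm hxm₁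
  exact nonempty_iff_ne_empty.1 ⟨x, hx₁, hxn⟩
end
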